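/- Let (M, μ) be a measure space with 0 < μ(M) = V < ∞, let n ≥ 7 be an integer, and let λ, q be real numbers. Let F, G ∈ L²(μ) and W, S be μ-integrable real-valued functions on M with F·W and F·S μ-integrable, such that F ≥ 0 and W ≥ 0 almost everywhere and S ≤ n(n−1)·G almost everywhere. Assume (i) λ·V ≤ n² ∫_M F·G dμ + 2(n+2) ∫_M F·W dμ + ((n²−2n−4)/(2(n−1))) ∫_M F·S dμ + q, and (ii) ∫_M F² dμ ≤ ∫_M F·G dμ − ((n−6)/n) ∫_M F·W dμ. Then λ·V ≤ (1/2) n (n²−4) ∫_M G² dμ + q. -/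

import Mathlib

/-!
Since `S ≤ n(n-1)G` and `F ≥ 0`, the scalar curvature term is bounded by `n(n-1) ∫ F G`, and
`n² + n(n² - 2n - 4)/2 = n(n² - 4)/2` collects everything into
`λ V ≤ n(n² - 4)/2 · ∫ F G + 2(n + 2) ∫ F W + q`.
Integrating `2 F G ≤ F² + G²` and using (ii) gives `∫ F G ≤ ∫ G² - ((n - 6)/n) ∫ F W`, and the
gradient term disappears because its total coefficient `-(n + 2)(n² - 8n + 8)/2` is nonpositive
for `n ≥ 7`.
-/

open MeasureTheory

namespace MeasureTheory

variable {M : Type*} [MeasurableSpace M] {μ : Measure M}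

theorem two_mul_integral_mul_le_integral_sq_add {F G : M → ℝ}
    (hF : MemLp F 2 μ) (hG : MemLp G 2 μ) :
    2 * ∫ x, F x * G x ∂μ ≤ (∫ x, F x ^ 2 ∂μ) + ∫ x, G x ^ 2 ∂μ := by
  rw [← integral_const_mul, ← integral_add hF.integrable_sq hG.integrable_sq]
  refine integral_mono ((hF.integrable_mul hG).const_mul 2)
    (hF.integrable_sq.add hG.integrable_sq) fun x => ?_
  nlinarith [sq_nonneg (F x - G x)]

theorem integral_mul_le_const_mul_integral_mul {F S G : M → ℝ} {c : ℝ}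
    (hFS : Integrable (fun x => F x * S x) μ) (hFG : Integrable (fun x => F x * G x) μ)
    (hF0 : ∀ᵐ x ∂μ, 0 ≤ F x) (hSG : ∀ᵐ x ∂μ, S x ≤ c * G x) :
    ∫ x, F x * S x ∂μ ≤ c * ∫ x, F x * G x ∂μ := by
  rw [← integral_const_mul]
  refine integral_mono_ae hFS (hFG.const_mul c) ?_
  filter_upwards [hF0, hSG] with x hFx hSx
  calc F x * S x ≤ F x * (c * G x) := mul_le_mul_of_nonneg_left hSx hFx
    _ = c * (F x * G x) := by ring

end MeasureTheory

theorem estimate_absorb_scalar_term {n A B C L q : ℝ} (hn : 4 ≤ n)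
    (hC : C ≤ n * (n - 1) * A)
    (hL : L ≤ n ^ 2 * A + 2 * (n + 2) * B + ((n ^ 2 - 2 * n - 4) / (2 * (n - 1))) * C + q) :
    L ≤ 1 / 2 * n * (n ^ 2 - 4) * A + 2 * (n + 2) * B + q := by
  have hcoef : 0 ≤ (n ^ 2 - 2 * n - 4) / (2 * (n - 1)) := by
    apply div_nonneg <;> nlinarith
  have hcollect : n ^ 2 * A + (n ^ 2 - 2 * n - 4) / (2 * (n - 1)) * (n * (n - 1) * A) =
      1 / 2 * n * (n ^ 2 - 4) * A := by
    field_simp [show n - 1 ≠ 0 by linarith]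
    ring
  nlinarith [mul_le_mul_of_nonneg_left hC hcoef]

theorem estimate_discard_gradient_term {n A B P D : ℝ} (hn : 7 ≤ n) (hB : 0 ≤ B)
    (hP : P ≤ A - (n - 6) / n * B) (hAPD : 2 * A ≤ P + D) :
    1 / 2 * n * (n ^ 2 - 4) * A + 2 * (n + 2) * B ≤ 1 / 2 * n * (n ^ 2 - 4) * D := by
  have hA : A ≤ D - (n - 6) / n * B := by linarith
  have hscale : n * ((n - 6) / n * B) = (n - 6) * B := by
    field_simp [show n ≠ 0 by linarith]
  have hgap : 0 ≤ (n + 2) * (n ^ 2 - 8 * n + 8) * B :=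
    mul_nonneg (mul_nonneg (by linarith) (by nlinarith)) hB
  nlinarith [mul_le_mul_of_nonneg_left hA (show 0 ≤ 1 / 2 * n * (n ^ 2 - 4) by nlinarith)]

theorem main_estimate_chain_general
    {M : Type*} [MeasurableSpace M] (μ : Measure M)
    (n : ℕ) (hn : 7 ≤ n)
    (V lam q : ℝ)
    (F G W S : M → ℝ)
    (hF : MemLp F 2 μ) (hG : MemLp G 2 μ)
    (hFS : Integrable (fun x => F x * S x) μ)
    (hF0 : ∀ᵐ x ∂μ, 0 ≤ F x)
    (hW0 : ∀ᵐ x ∂μ, 0 ≤ W x)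
    (hSle : ∀ᵐ x ∂μ, S x ≤ (n : ℝ) * ((n : ℝ) - 1) * G x)
    (hi : lam * V ≤ (n : ℝ) ^ 2 * (∫ x, F x * G x ∂μ) +
        2 * ((n : ℝ) + 2) * (∫ x, F x * W x ∂μ) +
        (((n : ℝ) ^ 2 - 2 * (n : ℝ) - 4) / (2 * ((n : ℝ) - 1))) *
          (∫ x, F x * S x ∂μ) + q)
    (hii : ∫ x, (F x) ^ 2 ∂μ ≤
        (∫ x, F x * G x ∂μ) - (((n : ℝ) - 6) / (n : ℝ)) * ∫ x, F x * W x ∂μ) :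
    lam * V ≤ (1 / 2 : ℝ) * (n : ℝ) * ((n : ℝ) ^ 2 - 4) * (∫ x, (G x) ^ 2 ∂μ) + q := by
  have hn7 : (7 : ℝ) ≤ n := by exact_mod_cast hn
  have hFS_le := integral_mul_le_const_mul_integral_mul hFS (hF.integrable_mul hG) hF0 hSle
  have hFW0 : 0 ≤ ∫ x, F x * W x ∂μ := integral_nonneg_of_ae <| by
    filter_upwards [hF0, hW0] with x hFx hWx using mul_nonneg hFx hWx
  have hcollected := estimate_absorb_scalar_term (by linarith) hFS_le hi
  have hgradient := estimate_discard_gradient_term hn7 hFW0 hii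
    (two_mul_integral_mul_le_integral_sq_add hF hG)
  linarith

theorem main_estimate_chain
    {M : Type*} [MeasurableSpace M] (μ : Measure M)
    (n : ℕ) (hn : 7 ≤ n)
    (V lam q : ℝ) (hV0 : 0 < V) (hV : μ Set.univ = ENNReal.ofReal V)
    (F G W S : M → ℝ)
    (hF : MemLp F 2 μ) (hG : MemLp G 2 μ)
    (hW : Integrable W μ) (hS : Integrable S μ)
    (hFW : Integrable (fun x => F x * W x) μ)
    (hFS : Integrable (fun x => F x * S x) μ)
    (hF0 : ∀ᵐ x ∂μ, 0 ≤ F x)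
    (hW0 : ∀ᵐ x ∂μ, 0 ≤ W x)
    (hSle : ∀ᵐ x ∂μ, S x ≤ (n : ℝ) * ((n : ℝ) - 1) * G x)
    (hi : lam * V ≤ (n : ℝ) ^ 2 * (∫ x, F x * G x ∂μ) +
        2 * ((n : ℝ) + 2) * (∫ x, F x * W x ∂μ) +
        (((n : ℝ) ^ 2 - 2 * (n : ℝ) - 4) / (2 * ((n : ℝ) - 1))) *
          (∫ x, F x * S x ∂μ) + q)
    (hii : ∫ x, (F x) ^ 2 ∂μ ≤
        (∫ x, F x * G x ∂μ) - (((n : ℝ) - 6) / (n : ℝ)) * ∫ x, F x * W x ∂μ) :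
    lam * V ≤ (1 / 2 : ℝ) * (n : ℝ) * ((n : ℝ) ^ 2 - 4) * (∫ x, (G x) ^ 2 ∂μ) + q :=
  main_estimate_chain_general μ n hn V lam q F G W S hF hG hFS hF0 hW0 hSle hi hii
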